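/- Let z > 0 and n > 0, let f : [-1/2,1/2] → ℝ be nondecreasing, and for integers j ≥ 2 define ξ_j = 2^{j-1}( ∫_{2^{-j}}^{2^{-j+1}} f(t) dt − ∫_{-2^{-j+1}}^{-2^{-j}} f(t) dt ) and σ_j = (2^{j-1}/n)^{1/2}. Then there exists a smallest integer j* ≥ 2 with ξ_{j*} ≤ z σ_{j*}, and for this j* there exists a nondecreasing function g on [-1/2,1/2] with ∫_{-1/2}^{1/2} (f(t) − g(t))² dt ≤ z²/n and |g(0) − f(0)| ≥ (1/√2) z σ_{j*}. In particular ω(z/√n, f, F_m) ≥ (1/√2) z σ_{j*}. -/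

import Mathlib

/-!
Since `f` is nondecreasing, `ξ_j ≤ (f(1/2) - f(-1/2))/2` for all `j`, while `σ_j → ∞`; so
`j*` exists. Put `c = zσ_{j*}/√2`. If `j* = 2`, raising `f` on `[0, 1/2]` to at least
`f(0) + c` keeps it nondecreasing and costs at most `c²/2 ≤ z²/n` in `L²`. Otherwise, with
`B = 2^{-(j*-1)}`, minimality of `j*` says `ξ_{j*-1} > zσ_{j*-1} = c`: the means of `f` over
`[B, 2B]` and over `[-2B, -B]` differ by more than `2c`. Hence `f(2B) > f(0) + c` or
`f(-2B) < f(0) - c`. In the first case `f ≥ f(0) + c` beyond `2B`, so raising `f` to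
`f(0) + c` on `[0, 2B]` costs at most `2Bc² = z²/n`; the second case is the first one for the
reflection `t ↦ -f(-t)`.
-/

open MeasureTheory

noncomputable def omegaMonotone (ε : ℝ) (f : ℝ → ℝ) : ℝ :=
  sSup {d : ℝ | ∃ g : ℝ → ℝ, MonotoneOn g (Set.Icc (-(1:ℝ)/2) (1/2)) ∧
    (∫ t in (-(1:ℝ)/2)..(1/2), (g t - f t)^2) ≤ ε^2 ∧ d = |g 0 - f 0|}

open Set Filter

lemma MonotoneOn.intervalIntegrable_sq_sub {f g : ℝ → ℝ} {a b : ℝ} (hab : a ≤ b)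
    (hf : MonotoneOn f (Icc a b)) (hg : MonotoneOn g (Icc a b)) :
    IntervalIntegrable (fun t => (f t - g t) ^ 2) volume a b := by
  refine IntegrableOn.intervalIntegrable ?_
  rw [uIcc_of_le hab]
  exact ((hf.memLp_isCompact isCompact_Icc).sub
    (hg.memLp_isCompact isCompact_Icc)).integrable_sq

lemma MonotoneOn.integral_le_mul {f : ℝ → ℝ} {x y : ℝ} (hf : MonotoneOn f (Icc x y))
    (hxy : x ≤ y) : ∫ t in x..y, f t ≤ (y - x) * f y := by
  have hint : IntervalIntegrable f volume x y := (uIcc_of_le hxy ▸ hf).intervalIntegrable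
  simpa [mul_comm] using intervalIntegral.integral_mono_on hxy hint intervalIntegrable_const
    fun t ht => hf ht (right_mem_Icc.2 hxy) ht.2

lemma MonotoneOn.mul_le_integral {f : ℝ → ℝ} {x y : ℝ} (hf : MonotoneOn f (Icc x y))
    (hxy : x ≤ y) : (y - x) * f x ≤ ∫ t in x..y, f t := by
  have hint : IntervalIntegrable f volume x y := (uIcc_of_le hxy ▸ hf).intervalIntegrable
  simpa [mul_comm] using intervalIntegral.integral_mono_on hxy intervalIntegrable_const hint
    fun t ht => hf (left_mem_Icc.2 hxy) ht ht.1

lemma intervalIntegrable_indicator_Icc_const {a b x y C : ℝ} :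
    IntervalIntegrable ((Icc x y).indicator fun _ => C) volume a b :=
  ((integrable_indicator_iff measurableSet_Icc).2
    (integrableOn_const measure_Icc_lt_top.ne)).intervalIntegrable

lemma integral_indicator_Icc_const {a b x y C : ℝ} (hax : a < x) (hxy : x ≤ y) (hyb : y ≤ b) :
    ∫ t in a..b, (Icc x y).indicator (fun _ => C) t = (y - x) * C := by
  rw [intervalIntegral.integral_of_le (hax.le.trans (hxy.trans hyb)),
    integral_indicator_const _ measurableSet_Icc, measureReal_restrict_apply measurableSet_Icc,
    inter_eq_left.2 (Icc_subset_Ioc hax hyb), Real.volume_real_Icc_of_le hxy, smul_eq_mul]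

lemma MonotoneOn.neg_comp_neg {f : ℝ → ℝ} {a : ℝ} (hf : MonotoneOn f (Icc (-a) a)) :
    MonotoneOn (fun t => -f (-t)) (Icc (-a) a) := fun x hx y hy hxy =>
  neg_le_neg <| hf ⟨by linarith [hy.2], by linarith [hy.1]⟩
    ⟨by linarith [hx.2], by linarith [hx.1]⟩ (neg_le_neg hxy)

lemma integral_sq_sub_neg_comp_neg (f g : ℝ → ℝ) (a : ℝ) :
    ∫ t in -a..a, (-f (-t) - -g (-t)) ^ 2 = ∫ t in -a..a, (f t - g t) ^ 2 := by
  calc _ = ∫ t in -a..a, (fun s => (f s - g s) ^ 2) (-t) := by congr 1; ext t; ring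
    _ = _ := by rw [intervalIntegral.integral_comp_neg (fun s => (f s - g s) ^ 2), neg_neg]

noncomputable def raiseFrom (f : ℝ → ℝ) (x₀ c t : ℝ) : ℝ :=
  if t < x₀ then f t else max (f t) (f x₀ + c)

section raiseFrom

variable {f : ℝ → ℝ} {x₀ c : ℝ}

lemma MonotoneOn.raiseFrom {s : Set ℝ} (hf : MonotoneOn f s) (x₀ c : ℝ) :
    MonotoneOn (raiseFrom f x₀ c) s := by
  intro x hx y hy hxy
  unfold _root_.raiseFrom
  split_ifs with hxx₀ hyx₀ hyx₀
  · exact hf hx hy hxy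
  · exact (hf hx hy hxy).trans (le_max_left _ _)
  · linarith
  · exact max_le_max (hf hx hy hxy) le_rfl

lemma raiseFrom_self (hc : 0 ≤ c) : raiseFrom f x₀ c x₀ = f x₀ + c := by
  simp [raiseFrom, hc]

lemma sq_sub_raiseFrom_le_indicator {s : Set ℝ} {t₀ t : ℝ} (hf : MonotoneOn f s) (hx₀ : x₀ ∈ s)
    (hc : 0 ≤ c) (hbig : ∀ t ∈ s, t₀ < t → f x₀ + c ≤ f t) (ht : t ∈ s) :
    (f t - raiseFrom f x₀ c t) ^ 2 ≤ (Icc x₀ t₀).indicator (fun _ => c ^ 2) t := by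
  unfold raiseFrom
  by_cases htx₀ : t < x₀
  · simp [htx₀]
  by_cases htt₀ : t₀ < t
  · simpa [htx₀, max_eq_left (hbig t ht htt₀)] using
      indicator_nonneg (fun _ _ => sq_nonneg c) t
  have hmem : t ∈ Icc x₀ t₀ := ⟨not_lt.1 htx₀, not_lt.1 htt₀⟩
  have hft : f x₀ ≤ f t := hf hx₀ ht hmem.1
  rw [if_neg htx₀, indicator_of_mem hmem, sub_sq_comm]
  exact pow_le_pow_left₀ (sub_nonneg.2 (le_max_left _ _))
    (sub_le_iff_le_add.2 (max_le (by linarith) (by linarith))) 2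

lemma integral_sq_sub_raiseFrom_le {a b t₀ : ℝ} (hf : MonotoneOn f (Icc a b)) (hax₀ : a < x₀)
    (hx₀t₀ : x₀ ≤ t₀) (ht₀b : t₀ ≤ b) (hc : 0 ≤ c)
    (hbig : ∀ t ∈ Icc a b, t₀ < t → f x₀ + c ≤ f t) :
    ∫ t in a..b, (f t - raiseFrom f x₀ c t) ^ 2 ≤ (t₀ - x₀) * c ^ 2 := by
  have hab : a ≤ b := by linarith
  calc _ ≤ ∫ t in a..b, (Icc x₀ t₀).indicator (fun _ => c ^ 2) t :=
        intervalIntegral.integral_mono_on hab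
          (hf.intervalIntegrable_sq_sub hab (hf.raiseFrom x₀ c))
          intervalIntegrable_indicator_Icc_const
          fun t ht => sq_sub_raiseFrom_le_indicator hf ⟨hax₀.le, hx₀t₀.trans ht₀b⟩ hc hbig ht
    _ = _ := integral_indicator_Icc_const hax₀ hx₀t₀ ht₀b

end raiseFrom

lemma exists_monotoneOn_raise {f : ℝ → ℝ} {a c t₀ : ℝ} (hf : MonotoneOn f (Icc (-a) a))
    (hc : 0 ≤ c) (ht₀ : 0 < t₀) (ht₀a : t₀ ≤ a)
    (hbig : ∀ t ∈ Icc (-a) a, t₀ < t → f 0 + c ≤ f t) :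
    ∃ g, MonotoneOn g (Icc (-a) a) ∧ ∫ t in -a..a, (f t - g t) ^ 2 ≤ t₀ * c ^ 2 ∧
      g 0 = f 0 + c :=
  ⟨raiseFrom f 0 c, hf.raiseFrom 0 c,
    by simpa using integral_sq_sub_raiseFrom_le hf (by linarith) ht₀.le ht₀a hc hbig,
    raiseFrom_self hc⟩

noncomputable def dyadicContrast (f : ℝ → ℝ) (B : ℝ) : ℝ :=
  (∫ t in B..2 * B, f t) - ∫ t in -(2 * B)..-B, f t

section dyadicContrast

variable {f : ℝ → ℝ} {a B : ℝ}

lemma integral_right_block_le (hf : MonotoneOn f (Icc (-a) a)) (hB : 0 < B) (hBa : 2 * B ≤ a) :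
    ∫ t in B..2 * B, f t ≤ B * f (2 * B) := by
  have := (hf.mono (Icc_subset_Icc (by linarith) hBa)).integral_le_mul
    (by linarith : B ≤ 2 * B)
  linarith

lemma le_integral_left_block (hf : MonotoneOn f (Icc (-a) a)) (hB : 0 < B) (hBa : 2 * B ≤ a) :
    B * f (-(2 * B)) ≤ ∫ t in -(2 * B)..-B, f t := by
  have := (hf.mono (Icc_subset_Icc (by linarith) (by linarith))).mul_le_integral
    (by linarith : -(2 * B) ≤ -B)
  linarith

lemma dyadicContrast_le (hf : MonotoneOn f (Icc (-a) a)) (hB : 0 < B) (hBa : 2 * B ≤ a) :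
    dyadicContrast f B ≤ B * (f a - f (-a)) := by
  have hright : f (2 * B) ≤ f a := hf ⟨by linarith, hBa⟩ ⟨by linarith, le_rfl⟩ hBa
  have hleft : f (-a) ≤ f (-(2 * B)) :=
    hf ⟨le_rfl, by linarith⟩ ⟨by linarith, by linarith⟩ (by linarith)
  have := mul_le_mul_of_nonneg_left (sub_le_sub hright hleft) hB.le
  have := integral_right_block_le hf hB hBa
  have := le_integral_left_block hf hB hBa
  unfold dyadicContrast
  linarith

lemma exists_perturbation_of_mul_lt_dyadicContrast {c : ℝ} (hf : MonotoneOn f (Icc (-a) a))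
    (hB : 0 < B) (hBa : 2 * B ≤ a) (hc : 0 ≤ c) (h : 2 * B * c < dyadicContrast f B) :
    ∃ g, MonotoneOn g (Icc (-a) a) ∧ ∫ t in -a..a, (f t - g t) ^ 2 ≤ 2 * B * c ^ 2 ∧
      |g 0 - f 0| = c := by
  have hright := integral_right_block_le hf hB hBa
  have hleft := le_integral_left_block hf hB hBa
  unfold dyadicContrast at h
  rcases lt_or_ge (B * (f 0 + c)) (∫ t in B..2 * B, f t) with hR | hL
  · have h2B : f 0 + c < f (2 * B) := lt_of_mul_lt_mul_left (hR.trans_le hright) hB.le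
    obtain ⟨g, hg, hcost, hg0⟩ := exists_monotoneOn_raise hf hc (by linarith) hBa
      fun t ht h2Bt => h2B.le.trans (hf ⟨by linarith, hBa⟩ ht h2Bt.le)
    exact ⟨g, hg, hcost, by rw [hg0, add_sub_cancel_left, abs_of_nonneg hc]⟩
  · -- lowering `f` on `[-2B, 0]` is raising its reflection `t ↦ -f (-t)` on `[0, 2B]`
    have h2B : f (-(2 * B)) < f 0 - c :=
      lt_of_mul_lt_mul_left (hleft.trans_lt (by linarith)) hB.le
    obtain ⟨g, hg, hcost, hg0⟩ := exists_monotoneOn_raise hf.neg_comp_neg hc (by linarith) hBa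
      fun t ht h2Bt => by
        have := hf ⟨by linarith [ht.2], by linarith [ht.1]⟩ ⟨by linarith, by linarith⟩
          (by linarith : -t ≤ -(2 * B))
        simp only [neg_zero]
        linarith
    refine ⟨fun t => -g (-t), hg.neg_comp_neg, ?_, ?_⟩
    · rw [← integral_sq_sub_neg_comp_neg]
      simpa using hcost
    · simp [hg0, abs_of_nonneg hc]

end dyadicContrast

section modulus

variable {f g : ℝ → ℝ} {a ε : ℝ}

lemma mul_sq_le_integral_sq_sub (hf : MonotoneOn f (Icc (-a) a))
    (hg : MonotoneOn g (Icc (-a) a)) (ha : 0 < a) (hfg : f a ≤ g 0) :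
    a * (g 0 - f a) ^ 2 ≤ ∫ t in -a..a, (g t - f t) ^ 2 := by
  have h0 : (0 : ℝ) ∈ Icc (-a) a := ⟨by linarith, ha.le⟩
  calc a * (g 0 - f a) ^ 2
        = ∫ t in -a..a, (Icc 0 a).indicator (fun _ => (g 0 - f a) ^ 2) t := by
          rw [integral_indicator_Icc_const (by linarith) ha.le le_rfl, sub_zero]
    _ ≤ _ := by
      refine intervalIntegral.integral_mono_on (by linarith)
        intervalIntegrable_indicator_Icc_const (hg.intervalIntegrable_sq_sub (by linarith) hf)
        fun t ht => ?_
      by_cases ht0 : t ∈ Icc 0 a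
      · rw [indicator_of_mem ht0]
        have hgt : g 0 ≤ g t := hg h0 ht ht0.1
        have hft : f t ≤ f a := hf ht ⟨by linarith, le_rfl⟩ ht.2
        exact pow_le_pow_left₀ (sub_nonneg.2 hfg) (by linarith) 2
      · rw [indicator_of_notMem ht0]
        positivity

lemma sub_le_of_integral_sq_sub_le (hf : MonotoneOn f (Icc (-a) a))
    (hg : MonotoneOn g (Icc (-a) a)) (ha : 0 < a) (h : ∫ t in -a..a, (g t - f t) ^ 2 ≤ ε ^ 2) :
    g 0 - f 0 ≤ f a - f (-a) + 1 + ε ^ 2 / a := by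
  have hf0 : f (-a) ≤ f 0 := hf ⟨le_rfl, by linarith⟩ ⟨by linarith, ha.le⟩ (by linarith)
  suffices g 0 - f a ≤ 1 + ε ^ 2 / a by linarith
  rcases le_or_gt (g 0 - f a) 1 with hu | hu
  · linarith [div_nonneg (sq_nonneg ε) ha.le]
  · have hsq : (g 0 - f a) ^ 2 ≤ ε ^ 2 / a := by
      rw [le_div_iff₀ ha, mul_comm]
      exact (mul_sq_le_integral_sq_sub hf hg ha (by linarith)).trans h
    nlinarith

lemma abs_sub_le_of_integral_sq_sub_le (hf : MonotoneOn f (Icc (-a) a))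
    (hg : MonotoneOn g (Icc (-a) a)) (ha : 0 < a) (h : ∫ t in -a..a, (g t - f t) ^ 2 ≤ ε ^ 2) :
    |g 0 - f 0| ≤ f a - f (-a) + 1 + ε ^ 2 / a := by
  refine abs_sub_le_iff.2 ⟨sub_le_of_integral_sq_sub_le hf hg ha h, ?_⟩
  have := sub_le_of_integral_sq_sub_le hf.neg_comp_neg hg.neg_comp_neg ha
    ((integral_sq_sub_neg_comp_neg g f a).trans_le h)
  simp only [neg_zero, neg_neg] at this
  linarith

end modulus

lemma le_omegaMonotone {f g : ℝ → ℝ} {ε : ℝ} (hf : MonotoneOn f (Icc (-(1 / 2)) (1 / 2)))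
    (hg : MonotoneOn g (Icc (-(1 / 2)) (1 / 2)))
    (h : ∫ t in -(1 / 2)..1 / 2, (f t - g t) ^ 2 ≤ ε ^ 2) :
    |g 0 - f 0| ≤ omegaMonotone ε f := by
  have h' : ∫ t in -(1 / 2)..1 / 2, (g t - f t) ^ 2 ≤ ε ^ 2 :=
    (intervalIntegral.integral_congr fun t _ => sub_sq_comm (g t) (f t)).trans_le h
  -- `sSup` of a set that is not bounded above is `0`, so a bound is needed besides membership
  refine le_csSup ⟨f (1 / 2) - f (-(1 / 2)) + 1 + ε ^ 2 / (1 / 2), ?_⟩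
    ⟨g, by rwa [neg_div], by rw [neg_div]; exact h', rfl⟩
  rintro _ ⟨g', hg', hg'f, rfl⟩
  rw [neg_div] at hg' hg'f
  exact abs_sub_le_of_integral_sq_sub_le hf hg' one_half_pos hg'f

lemma two_mul_two_zpow_neg_le {j : ℕ} (hj : 2 ≤ j) : 2 * (2 : ℝ) ^ (-(j : ℤ)) ≤ 1 / 2 := by
  have : (2 : ℝ) ^ (-(j : ℤ)) ≤ 2 ^ (-2 : ℤ) := zpow_le_zpow_right₀ one_le_two (by omega)
  norm_num at this ⊢
  linarith

lemma two_zpow_sub_one_eq (j : ℤ) : (2 : ℝ) ^ (j - 1) = 1 / (2 * 2 ^ (-j)) := by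
  rw [zpow_sub_one₀ two_ne_zero, zpow_neg]
  field_simp

section statistics

variable {z n : ℝ} {f : ℝ → ℝ} {ξ σ : ℕ → ℝ}

lemma xi_eq_div (hξ : ∀ j : ℕ, 2 ≤ j →
      ξ j = (2:ℝ) ^ ((j:ℤ) - 1) *
        ((∫ t in ((2:ℝ) ^ (-(j:ℤ)))..((2:ℝ) ^ (-(j:ℤ) + 1)), f t)
          - ∫ t in (-(2:ℝ) ^ (-(j:ℤ) + 1))..(-(2:ℝ) ^ (-(j:ℤ))), f t))
    {j : ℕ} (hj : 2 ≤ j) :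
    ξ j = dyadicContrast f (2 ^ (-(j : ℤ))) / (2 * 2 ^ (-(j : ℤ))) := by
  rw [hξ j hj, dyadicContrast, zpow_add_one₀ two_ne_zero, mul_comm _ (2 : ℝ),
    two_zpow_sub_one_eq, one_div_mul_eq_div]

lemma sigma_sq_eq (hn : 0 < n) (hσ : ∀ j : ℕ, σ j = Real.sqrt ((2:ℝ) ^ ((j:ℤ) - 1) / n))
    (j : ℕ) : σ j ^ 2 = 1 / (2 * 2 ^ (-(j : ℤ)) * n) := by
  rw [hσ, Real.sq_sqrt (by positivity), two_zpow_sub_one_eq, div_div]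

lemma sigma_succ (hσ : ∀ j : ℕ, σ j = Real.sqrt ((2:ℝ) ^ ((j:ℤ) - 1) / n)) (k : ℕ) :
    σ (k + 1) = √2 * σ k := by
  rw [hσ, hσ, ← Real.sqrt_mul zero_le_two, Nat.cast_succ, add_sub_cancel_right,
    zpow_sub_one₀ two_ne_zero]
  congr 1
  field_simp

lemma tendsto_sigma (hn : 0 < n) (hσ : ∀ j : ℕ, σ j = Real.sqrt ((2:ℝ) ^ ((j:ℤ) - 1) / n)) :
    Tendsto σ atTop atTop := by
  have hσ' : σ = fun j : ℕ => √((2 : ℝ) ^ j / 2 / n) := by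
    ext j
    rw [hσ, zpow_sub_one₀ two_ne_zero, zpow_natCast, ← div_eq_mul_inv]
  rw [hσ']
  exact Real.tendsto_sqrt_atTop.comp <|
    ((tendsto_pow_atTop_atTop_of_one_lt one_lt_two).atTop_div_const two_pos).atTop_div_const hn

lemma exists_xi_le_mul_sigma (hz : 0 < z) (hn : 0 < n)
    (hf : MonotoneOn f (Icc (-(1 / 2)) (1 / 2)))
    (hξ : ∀ j : ℕ, 2 ≤ j → ξ j = dyadicContrast f (2 ^ (-(j : ℤ))) / (2 * 2 ^ (-(j : ℤ))))
    (hσ : ∀ j : ℕ, σ j = Real.sqrt ((2:ℝ) ^ ((j:ℤ) - 1) / n)) :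
    ∃ j, 2 ≤ j ∧ ξ j ≤ z * σ j := by
  have hξ_le : ∀ j, 2 ≤ j → ξ j ≤ (f (1 / 2) - f (-(1 / 2))) / 2 := by
    intro j hj
    have hB : (0 : ℝ) < 2 ^ (-(j : ℤ)) := by positivity
    rw [hξ j hj, div_le_iff₀ (by positivity)]
    linarith [dyadicContrast_le hf hB (two_mul_two_zpow_neg_le hj)]
  obtain ⟨j, hj, hjσ⟩ := ((eventually_ge_atTop 2).and
    (((tendsto_sigma hn hσ).const_mul_atTop hz).eventually_ge_atTop
      ((f (1 / 2) - f (-(1 / 2))) / 2))).exists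
  exact ⟨j, hj, (hξ_le j hj).trans hjσ⟩

lemma exists_perturbation_of_forall_lt_xi (hz : 0 ≤ z) (hn : 0 < n)
    (hf : MonotoneOn f (Icc (-(1 / 2)) (1 / 2)))
    (hξ : ∀ j : ℕ, 2 ≤ j → ξ j = dyadicContrast f (2 ^ (-(j : ℤ))) / (2 * 2 ^ (-(j : ℤ))))
    (hσ : ∀ j : ℕ, σ j = Real.sqrt ((2:ℝ) ^ ((j:ℤ) - 1) / n))
    {J : ℕ} (hJ : 2 ≤ J) (hmin : ∀ j, 2 ≤ j → j < J → z * σ j < ξ j) :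
    ∃ g, MonotoneOn g (Icc (-(1 / 2)) (1 / 2)) ∧
      ∫ t in -(1 / 2)..1 / 2, (f t - g t) ^ 2 ≤ z ^ 2 / n ∧
      |g 0 - f 0| = 1 / √2 * z * σ J := by
  obtain ⟨k, rfl⟩ : ∃ k, J = k + 1 := ⟨J - 1, by omega⟩
  have hc : 1 / √2 * z * σ (k + 1) = z * σ k := by
    rw [sigma_succ hσ]
    field_simp
  have hc0 : 0 ≤ z * σ k := mul_nonneg hz (by rw [hσ]; positivity)
  have hcsq : (z * σ k) ^ 2 = z ^ 2 / (2 * 2 ^ (-(k : ℤ)) * n) := by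
    rw [mul_pow, sigma_sq_eq hn hσ, mul_one_div]
  rw [hc]
  rcases (show k = 1 ∨ 2 ≤ k by omega) with rfl | hk
  · obtain ⟨g, hg, hcost, hg0⟩ := exists_monotoneOn_raise hf hc0 one_half_pos le_rfl
      fun t ht h => absurd ht.2 h.not_ge
    refine ⟨g, hg, hcost.trans ?_, by rw [hg0, add_sub_cancel_left, abs_of_nonneg hc0]⟩
    rw [hcsq]
    norm_num
    linarith [div_nonneg (sq_nonneg z) hn.le]
  · have hB : (0 : ℝ) < 2 ^ (-(k : ℤ)) := by positivity
    have hgap : 2 * 2 ^ (-(k : ℤ)) * (z * σ k) < dyadicContrast f (2 ^ (-(k : ℤ))) := by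
      rw [← lt_div_iff₀' (by positivity), ← hξ k hk]
      exact hmin k hk (by omega)
    obtain ⟨g, hg, hcost, hg0⟩ :=
      exists_perturbation_of_mul_lt_dyadicContrast hf hB (two_mul_two_zpow_neg_le hk) hc0 hgap
    refine ⟨g, hg, hcost.trans_eq ?_, hg0⟩
    rw [hcsq]
    field_simp

end statistics

/-- Theorem 3 of Cai, Low and Xia (2013): for a nondecreasing `f` on `[-1/2, 1/2]`, with
`ξ_j = 2^{j-1}(∫_{2^{-j}}^{2^{-j+1}} f − ∫_{-2^{-j+1}}^{-2^{-j}} f)` and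
`σ_j = (2^{j-1}/n)^{1/2}`, there is a smallest `j* ≥ 2` with `ξ_{j*} ≤ z σ_{j*}`, and there
is a nondecreasing `g` with `‖f − g‖₂² ≤ z²/n` and `|g(0) − f(0)| ≥ (1/√2) z σ_{j*}`; in
particular `ω(z/√n, f, F_m) ≥ (1/√2) z σ_{j*}`. -/
theorem monotone_modulus_lower_bound
    (z n : ℝ) (hz : 0 < z) (hn : 0 < n)
    (f : ℝ → ℝ) (hf : MonotoneOn f (Set.Icc (-(1:ℝ)/2) (1/2)))
    (ξ σ : ℕ → ℝ)
    (hξ : ∀ j : ℕ, 2 ≤ j →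
      ξ j = (2:ℝ) ^ ((j:ℤ) - 1) *
        ((∫ t in ((2:ℝ) ^ (-(j:ℤ)))..((2:ℝ) ^ (-(j:ℤ) + 1)), f t)
          - ∫ t in (-(2:ℝ) ^ (-(j:ℤ) + 1))..(-(2:ℝ) ^ (-(j:ℤ))), f t))
    (hσ : ∀ j : ℕ, σ j = Real.sqrt ((2:ℝ) ^ ((j:ℤ) - 1) / n)) :
    ∃ jstar : ℕ, 2 ≤ jstar ∧ ξ jstar ≤ z * σ jstar ∧
      (∀ j : ℕ, 2 ≤ j → ξ j ≤ z * σ j → jstar ≤ j) ∧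
      (∃ g : ℝ → ℝ, MonotoneOn g (Set.Icc (-(1:ℝ)/2) (1/2)) ∧
        (∫ t in (-(1:ℝ)/2)..(1/2), (f t - g t)^2) ≤ z^2/n ∧
        (1/Real.sqrt 2) * z * σ jstar ≤ |g 0 - f 0|) ∧
      (1/Real.sqrt 2) * z * σ jstar ≤ omegaMonotone (z/Real.sqrt n) f := by
  rw [neg_div] at hf ⊢
  have hξ' := fun j (hj : 2 ≤ j) => xi_eq_div hξ hj
  have hex := exists_xi_le_mul_sigma hz hn hf hξ' hσ
  obtain ⟨hJ, hJξ⟩ := Nat.find_spec hex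
  obtain ⟨g, hg, hcost, hgJ⟩ := exists_perturbation_of_forall_lt_xi hz.le hn hf hξ' hσ hJ
    fun j hj hjJ => lt_of_not_ge fun hξj => Nat.find_min hex hjJ ⟨hj, hξj⟩
  refine ⟨Nat.find hex, hJ, hJξ, fun j hj hξj => Nat.find_min' hex ⟨hj, hξj⟩,
    ⟨g, hg, hcost, hgJ.ge⟩, ?_⟩
  rw [← hgJ]
  exact le_omegaMonotone hf hg (by rwa [div_pow, Real.sq_sqrt hn.le])
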